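/- arXiv:1907.01731 — 8 statements merged into one kernel-verified Lean document; each statement's English description precedes it below -/
import Mathlib

section
/- Let h > 0, let λ₁ ∈ ℂ \ {0}, let U_n(t), R_n(t), Q_n(t) be complex-valued functions, and let (f_n, g_n) be a solution of the associated Lax pair at λ = λ₁. Let Ω_n(t) be a complex-valued function, differentiable in t, satisfying Ω_{n+1} = −S_n Ω_n and Ω_n' = (i/2)(conj(λ₁)² − conj(λ₁)⁻² + |Q_n|² − |R_n|²) Ω_n for all n and t, where S_n := (1 + (i/2)h|U_n|²)/(1 − (i/2)h|U_n|²). Then the pair (−Ω_n conj(g_n), Ω_n conj(f_n)) is a solution of the Lax pair at λ = conj(λ₁). -/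
/-!
Complex conjugation turns the Lax pair at `λ` into one at `conj λ` after the swap
`(f, g) ↦ (-conj g, conj f)`, up to a scalar factor. In space the factor is `-S_n`, because
`S_n = conj D_n / D_n` with `D_n = 1 - (i/2) h |U_n|²` has modulus one; in time it is the
exponent in the equation for `Ω_n`. Multiplying by `Ω_n` absorbs both.
-/

open Complex ComplexConjugate

noncomputable section

/-- The factor `S = (1 + (i/2) h |u|^2)/(1 - (i/2) h |u|^2)`. -/
def mtmS (h : ℝ) (u : ℂ) : ℂ :=
  (1 + Complex.I / 2 * h * Complex.normSq u) / (1 - Complex.I / 2 * h * Complex.normSq u)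

/-- `(U, R, Q)` solves the semi-discrete massive Thirring model with lattice spacing `h`. -/
def IsMTMSolution (h : ℝ) (U R Q : ℤ → ℝ → ℂ) : Prop :=
  (∀ (n : ℤ) (t : ℝ), DifferentiableAt ℝ (U n) t) ∧
  (∀ (n : ℤ) (t : ℝ),
    4 * Complex.I * deriv (U n) t + Q (n + 1) t + Q n t
      + 2 * Complex.I / h * (R (n + 1) t - R n t)
      + (U n t) ^ 2 * (conj (R n t) + conj (R (n + 1) t))
      - U n t * ((Complex.normSq (Q (n + 1) t) : ℂ) + (Complex.normSq (Q n t) : ℂ)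
          + (Complex.normSq (R (n + 1) t) : ℂ) + (Complex.normSq (R n t) : ℂ))
      - Complex.I * h / 2 * (U n t) ^ 2 * (conj (Q (n + 1) t) - conj (Q n t)) = 0) ∧
  (∀ (n : ℤ) (t : ℝ),
    -(2 * Complex.I / h) * (Q (n + 1) t - Q n t) + 2 * U n t
      - (Complex.normSq (U n t) : ℂ) * (Q (n + 1) t + Q n t) = 0) ∧
  (∀ (n : ℤ) (t : ℝ),
    R (n + 1) t + R n t - 2 * U n t
      + Complex.I * h / 2 * (Complex.normSq (U n t) : ℂ) * (R (n + 1) t - R n t) = 0)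

/-- `(f, g)` solves the Lax pair of the semi-discrete massive Thirring model with
potentials `(U, R, Q)`, lattice spacing `h`, at spectral value `lam`. -/
def IsLaxSolution (h : ℝ) (U R Q : ℤ → ℝ → ℂ) (lam : ℂ) (f g : ℤ → ℝ → ℂ) : Prop :=
  (∀ (n : ℤ) (t : ℝ), DifferentiableAt ℝ (f n) t) ∧
  (∀ (n : ℤ) (t : ℝ), DifferentiableAt ℝ (g n) t) ∧
  (∀ (n : ℤ) (t : ℝ),
    f (n + 1) t = (lam + 2 * Complex.I / (h * lam) * mtmS h (U n t)) * f n t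
      + 2 * U n t / (1 - Complex.I / 2 * h * Complex.normSq (U n t)) * g n t) ∧
  (∀ (n : ℤ) (t : ℝ),
    g (n + 1) t = 2 * conj (U n t) / (1 - Complex.I / 2 * h * Complex.normSq (U n t)) * f n t
      + (2 * Complex.I / (h * lam) - lam * mtmS h (U n t)) * g n t) ∧
  (∀ (n : ℤ) (t : ℝ),
    deriv (f n) t = Complex.I / 2 * ((lam ^ 2 - (Complex.normSq (R n t) : ℂ)) * f n t
      + (lam * R n t - lam⁻¹ * Q n t) * g n t)) ∧
  (∀ (n : ℤ) (t : ℝ),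
    deriv (g n) t = Complex.I / 2 * ((lam * conj (R n t) - lam⁻¹ * conj (Q n t)) * f n t
      + ((Complex.normSq (Q n t) : ℂ) - (lam ^ 2)⁻¹) * g n t))

lemma one_add_ofReal_mul_I_ne_zero (r : ℝ) : (1 : ℂ) + r * I ≠ 0 := by
  intro H
  simpa using congrArg re H

lemma conj_mtmS_denom (h : ℝ) (u : ℂ) :
    conj (1 - I / 2 * h * normSq u) = 1 + I / 2 * h * normSq u := by
  simp only [map_sub, map_mul, map_div₀, map_one, map_ofNat, conj_I, conj_ofReal]
  ring

lemma mtmS_denom_ne_zero (h : ℝ) (u : ℂ) : 1 - I / 2 * h * normSq u ≠ 0 := by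
  convert one_add_ofReal_mul_I_ne_zero (-(h * normSq u / 2)) using 1
  push_cast; ring

lemma mtmS_ne_zero (h : ℝ) (u : ℂ) : mtmS h u ≠ 0 := by
  refine div_ne_zero ?_ (mtmS_denom_ne_zero h u)
  convert one_add_ofReal_mul_I_ne_zero (h * normSq u / 2) using 1
  push_cast; ring

lemma conj_mtmS (h : ℝ) (u : ℂ) : conj (mtmS h u) = (mtmS h u)⁻¹ := by
  rw [mtmS, map_div₀, ← conj_mtmS_denom, conj_conj, conj_mtmS_denom, inv_div]

lemma mtmS_mul_conj_div_denom (h : ℝ) (u v : ℂ) :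
    mtmS h u * conj (v / (1 - I / 2 * h * normSq u))
      = conj v / (1 - I / 2 * h * normSq u) := by
  rw [mtmS, map_div₀, ← conj_mtmS_denom]
  exact div_mul_div_cancel₀' ((map_ne_zero _).2 (mtmS_denom_ne_zero h u)) _ _

lemma conj_two_mul_I_div (h : ℝ) (lam : ℂ) :
    conj (2 * I / (h * lam)) = -(2 * I / (h * conj lam)) := by
  simp only [map_div₀, map_mul, map_ofNat, conj_I, conj_ofReal]
  ring

-- `F`, `G`, `W` stand for `f n t`, `g n t`, `Ω n t` in this and the three lemmas below.
lemma lax_step_conj_fst (h : ℝ) (lam u F G W : ℂ) :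
    -(-(mtmS h u) * W * conj (2 * conj u / (1 - I / 2 * h * normSq u) * F
        + (2 * I / (h * lam) - lam * mtmS h u) * G))
      = (conj lam + 2 * I / (h * conj lam) * mtmS h u) * -(W * conj G)
        + 2 * u / (1 - I / 2 * h * normSq u) * (W * conj F) := by
  have hS := mul_inv_cancel₀ (mtmS_ne_zero h u)
  have hU := mtmS_mul_conj_div_denom h u (2 * conj u)
  simp only [map_mul, map_ofNat, conj_conj] at hU
  simp only [map_add, map_sub, map_mul, conj_mtmS, conj_two_mul_I_div]
  linear_combination (W * conj F) * hU - (conj lam * W * conj G) * hS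

lemma lax_step_conj_snd (h : ℝ) (lam u F G W : ℂ) :
    -(mtmS h u) * W * conj ((lam + 2 * I / (h * lam) * mtmS h u) * F
        + 2 * u / (1 - I / 2 * h * normSq u) * G)
      = 2 * conj u / (1 - I / 2 * h * normSq u) * -(W * conj G)
        + (2 * I / (h * conj lam) - conj lam * mtmS h u) * (W * conj F) := by
  have hS := mul_inv_cancel₀ (mtmS_ne_zero h u)
  have hU := mtmS_mul_conj_div_denom h u (2 * u)
  simp only [map_mul, map_ofNat] at hU
  simp only [map_add, map_mul, conj_mtmS, conj_two_mul_I_div]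
  linear_combination -(W * conj G) * hU + (2 * I / (h * conj lam) * W * conj F) * hS

theorem HasDerivAt.mul_conj {Ω g : ℝ → ℂ} {Ω' g' : ℂ} {t : ℝ}
    (hΩ : HasDerivAt Ω Ω' t) (hg : HasDerivAt g g' t) :
    HasDerivAt (fun s => Ω s * conj (g s)) (Ω' * conj (g t) + Ω t * conj g') t :=
  hΩ.mul hg.star

lemma lax_deriv_conj_fst (lam R Q F G W : ℂ) :
    -(I / 2 * (conj lam ^ 2 - (conj lam ^ 2)⁻¹ + normSq Q - normSq R) * W * conj G
        + W * conj (I / 2 * ((lam * conj R - lam⁻¹ * conj Q) * F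
          + (normSq Q - (lam ^ 2)⁻¹) * G)))
      = I / 2 * ((conj lam ^ 2 - normSq R) * -(W * conj G)
        + (conj lam * R - (conj lam)⁻¹ * Q) * (W * conj F)) := by
  simp only [map_add, map_sub, map_mul, map_div₀, map_inv₀, map_pow, map_ofNat, conj_I,
    conj_ofReal, conj_conj]
  ring

lemma lax_deriv_conj_snd (lam R Q F G W : ℂ) :
    I / 2 * (conj lam ^ 2 - (conj lam ^ 2)⁻¹ + normSq Q - normSq R) * W * conj F
        + W * conj (I / 2 * ((lam ^ 2 - normSq R) * F + (lam * R - lam⁻¹ * Q) * G))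
      = I / 2 * ((conj lam * conj R - (conj lam)⁻¹ * conj Q) * -(W * conj G)
        + (normSq Q - (conj lam ^ 2)⁻¹) * (W * conj F)) := by
  simp only [map_add, map_sub, map_mul, map_div₀, map_inv₀, map_pow, map_ofNat, conj_I,
    conj_ofReal]
  ring

theorem lax_symmetry_conj_general
    (h : ℝ) (lam1 : ℂ)
    (U R Q : ℤ → ℝ → ℂ) (f g : ℤ → ℝ → ℂ)
    (hLax : IsLaxSolution h U R Q lam1 f g)
    (Ω : ℤ → ℝ → ℂ)
    (hΩdiff : ∀ (n : ℤ) (t : ℝ), DifferentiableAt ℝ (Ω n) t)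
    (hΩrec : ∀ (n : ℤ) (t : ℝ), Ω (n + 1) t = -(mtmS h (U n t)) * Ω n t)
    (hΩode : ∀ (n : ℤ) (t : ℝ),
      deriv (Ω n) t = Complex.I / 2 * ((conj lam1) ^ 2 - ((conj lam1) ^ 2)⁻¹
        + (Complex.normSq (Q n t) : ℂ) - (Complex.normSq (R n t) : ℂ)) * Ω n t) :
    IsLaxSolution h U R Q (conj lam1)
      (fun n t => -(Ω n t * conj (g n t)))
      (fun n t => Ω n t * conj (f n t)) := by
  obtain ⟨hf, hg, hfrec, hgrec, hfode, hgode⟩ := hLax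
  have hΩg n t := (hΩdiff n t).hasDerivAt.mul_conj (hg n t).hasDerivAt
  have hΩf n t := (hΩdiff n t).hasDerivAt.mul_conj (hf n t).hasDerivAt
  refine ⟨fun n t => (hΩg n t).differentiableAt.neg, fun n t => (hΩf n t).differentiableAt,
    fun n t => ?_, fun n t => ?_, fun n t => ?_, fun n t => ?_⟩
  · beta_reduce
    rw [hΩrec, hgrec]
    exact lax_step_conj_fst h lam1 (U n t) (f n t) (g n t) (Ω n t)
  · beta_reduce
    rw [hΩrec, hfrec]
    exact lax_step_conj_snd h lam1 (U n t) (f n t) (g n t) (Ω n t)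
  · rw [(hΩg n t).fun_neg.deriv, hΩode, hgode]
    exact lax_deriv_conj_fst lam1 (R n t) (Q n t) (f n t) (g n t) (Ω n t)
  · rw [(hΩf n t).deriv, hΩode, hfode]
    exact lax_deriv_conj_snd lam1 (R n t) (Q n t) (f n t) (g n t) (Ω n t)

/-- Symmetry of the Lax pair: from a solution at `lam1` one obtains a solution at `conj lam1`. -/
theorem lax_symmetry_conj
    (h : ℝ) (hh : 0 < h) (lam1 : ℂ) (hlam1 : lam1 ≠ 0)
    (U R Q : ℤ → ℝ → ℂ) (f g : ℤ → ℝ → ℂ)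
    (hLax : IsLaxSolution h U R Q lam1 f g)
    (Ω : ℤ → ℝ → ℂ)
    (hΩdiff : ∀ (n : ℤ) (t : ℝ), DifferentiableAt ℝ (Ω n) t)
    (hΩrec : ∀ (n : ℤ) (t : ℝ), Ω (n + 1) t = -(mtmS h (U n t)) * Ω n t)
    (hΩode : ∀ (n : ℤ) (t : ℝ),
      deriv (Ω n) t = Complex.I / 2 * ((conj lam1) ^ 2 - ((conj lam1) ^ 2)⁻¹
        + (Complex.normSq (Q n t) : ℂ) - (Complex.normSq (R n t) : ℂ)) * Ω n t) :
    IsLaxSolution h U R Q (conj lam1)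
      (fun n t => -(Ω n t * conj (g n t)))
      (fun n t => Ω n t * conj (f n t)) :=
  lax_symmetry_conj_general h lam1 U R Q f g hLax Ω hΩdiff hΩrec hΩode
end
end

section
/- Let λ₁ ∈ ℂ \ {0} and let f, g, a, b, c, d ∈ ℂ. Set Δ := conj(λ₁)|f|² + λ₁|g|² and assume Δ ≠ 0. Suppose that T(λ₁)·(f, g)ᵀ = (0,0)ᵀ and T(conj(λ₁))·(−conj(g), conj(f))ᵀ = (0,0)ᵀ, where T(λ) is the 2×2 matrix with entries T(λ)₁₁ = λ + a|λ₁|²/λ, T(λ)₁₂ = b, T(λ)₂₁ = c, T(λ)₂₂ = dλ + |λ₁|²/λ. Then a = −conj(Δ)/Δ, b = −(λ₁² − conj(λ₁)²) f conj(g)/Δ, c = (λ₁² − conj(λ₁)²) conj(f) g/Δ, and d = −conj(Δ)/Δ. -/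
open Complex ComplexConjugate

noncomputable section

/-- The one-fold Darboux matrix with parameter `lam1` and coefficients `a, b, c, d`. -/
def darbouxT (lam1 a b c d : ℂ) (lam : ℂ) : Matrix (Fin 2) (Fin 2) ℂ :=
  !![lam + a * (Complex.normSq lam1 : ℂ) / lam, b;
     c, d * lam + (Complex.normSq lam1 : ℂ) / lam]

/-!
Since `|λ₁|²/λ₁ = conj λ₁`, the two kernel conditions are four linear equations in `a, b, c, d`,
which split into a system for `(a, b)` and one for `(c, d)`. Both systems have determinant `Δ`,
and Cramer's rule gives the stated coefficients.
-/

open scoped Matrix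

theorem cramer_two_by_two {K : Type*} [Field K] {p q r s t u x y D : K}
    (hdet : p * t - q * s = D) (hD : D ≠ 0)
    (h₁ : p * x + q * y + r = 0) (h₂ : s * x + t * y + u = 0) :
    x = (q * u - r * t) / D ∧ y = (r * s - p * u) / D := by
  subst hdet
  constructor <;> rw [eq_div_iff hD]
  · linear_combination t * h₁ - q * h₂
  · linear_combination p * h₂ - s * h₁

namespace Complex

theorem normSq_div_self (z : ℂ) : (normSq z : ℂ) / z = conj z := by
  rcases eq_or_ne z 0 with rfl | hz
  · simp
  · rw [← mul_conj, mul_div_cancel_left₀ _ hz]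

theorem normSq_div_conj_self (z : ℂ) : (normSq z : ℂ) / conj z = z := by
  simpa using normSq_div_self (conj z)

end Complex

theorem darbouxT_self_mulVec (lam1 a b c d f g : ℂ) :
    darbouxT lam1 a b c d lam1 *ᵥ ![f, g] =
      ![conj lam1 * f * a + g * b + lam1 * f, f * c + lam1 * g * d + conj lam1 * g] := by
  rw [Matrix.mulVec_fin_two]
  simp only [darbouxT, Matrix.of_apply, Matrix.cons_val_zero, Matrix.cons_val_one, mul_div_assoc,
    normSq_div_self]
  congr 1
  · ring
  · congr 1; ring

theorem darbouxT_conj_self_mulVec (lam1 a b c d f g : ℂ) :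
    darbouxT lam1 a b c d (conj lam1) *ᵥ ![-conj g, conj f] =
      ![-(lam1 * conj g) * a + conj f * b + -(conj lam1 * conj g),
        -conj g * c + conj lam1 * conj f * d + lam1 * conj f] := by
  rw [Matrix.mulVec_fin_two]
  simp only [darbouxT, Matrix.of_apply, Matrix.cons_val_zero, Matrix.cons_val_one, mul_div_assoc,
    normSq_div_conj_self]
  congr 1
  · ring
  · congr 1; ring

theorem darboux_coefficients_general
    (lam1 : ℂ) (f g a b c d : ℂ)
    (Δ : ℂ) (hΔdef : Δ = conj lam1 * (Complex.normSq f : ℂ) + lam1 * (Complex.normSq g : ℂ))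
    (hΔ : Δ ≠ 0)
    (h1 : Matrix.mulVec (darbouxT lam1 a b c d lam1) ![f, g] = 0)
    (h2 : Matrix.mulVec (darbouxT lam1 a b c d (conj lam1)) ![-(conj g), conj f] = 0) :
    a = -(conj Δ) / Δ ∧
    b = -((lam1 ^ 2 - (conj lam1) ^ 2) * f * conj g) / Δ ∧
    c = (lam1 ^ 2 - (conj lam1) ^ 2) * conj f * g / Δ ∧
    d = -(conj Δ) / Δ := by
  rw [darbouxT_self_mulVec] at h1
  rw [darbouxT_conj_self_mulVec] at h2
  simp only [Matrix.cons_eq_zero_iff, Matrix.zero_empty, and_true] at h1 h2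
  obtain ⟨hab₁, hcd₁⟩ := h1
  obtain ⟨hab₂, hcd₂⟩ := h2
  have hΔ_eq : Δ = conj lam1 * f * conj f + lam1 * g * conj g := by
    rw [hΔdef, ← mul_conj, ← mul_conj]; ring
  have hΔ_conj : conj Δ = lam1 * f * conj f + conj lam1 * g * conj g := by
    rw [hΔ_eq]; simp only [map_add, map_mul, conj_conj]; ring
  have hdet_ab : conj lam1 * f * conj f - g * -(lam1 * conj g) = Δ := by rw [hΔ_eq]; ring
  have hdet_cd : f * (conj lam1 * conj f) - lam1 * g * -conj g = Δ := by rw [hΔ_eq]; ring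
  obtain ⟨ha, hb⟩ := cramer_two_by_two hdet_ab hΔ hab₁ hab₂
  obtain ⟨hc, hd⟩ := cramer_two_by_two hdet_cd hΔ hcd₁ hcd₂
  refine ⟨?_, ?_, ?_, ?_⟩
  · rw [ha, hΔ_conj]; ring
  · rw [hb]; ring
  · rw [hc]; ring
  · rw [hd, hΔ_conj]; ring

/-- Coefficients of the Darboux matrix determined by the kernel conditions. -/
theorem darboux_coefficients
    (lam1 : ℂ) (hlam1 : lam1 ≠ 0) (f g a b c d : ℂ)
    (Δ : ℂ) (hΔdef : Δ = conj lam1 * (Complex.normSq f : ℂ) + lam1 * (Complex.normSq g : ℂ))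
    (hΔ : Δ ≠ 0)
    (h1 : Matrix.mulVec (darbouxT lam1 a b c d lam1) ![f, g] = 0)
    (h2 : Matrix.mulVec (darbouxT lam1 a b c d (conj lam1)) ![-(conj g), conj f] = 0) :
    a = -(conj Δ) / Δ ∧
    b = -((lam1 ^ 2 - (conj lam1) ^ 2) * f * conj g) / Δ ∧
    c = (lam1 ^ 2 - (conj lam1) ^ 2) * conj f * g / Δ ∧
    d = -(conj Δ) / Δ :=
  darboux_coefficients_general lam1 f g a b c d Δ hΔdef hΔ h1 h2
end
end

section
/- Let λ₁ ∈ ℂ \ {0} and f, g ∈ ℂ with Δ := conj(λ₁)|f|² + λ₁|g|² ≠ 0. Define a = d = −conj(Δ)/Δ, b = −(λ₁² − conj(λ₁)²) f conj(g)/Δ, c = (λ₁² − conj(λ₁)²) conj(f) g/Δ, and let T(λ) be the 2×2 matrix with entries T(λ)₁₁ = λ + a|λ₁|²/λ, T(λ)₁₂ = b, T(λ)₂₁ = c, T(λ)₂₂ = dλ + |λ₁|²/λ. Then T(−λ₁)·(−f, g)ᵀ = (0,0)ᵀ and T(−conj(λ₁))·(conj(g), conj(f))ᵀ = (0,0)ᵀ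 (assuming −λ₁ and −conj(λ₁) are nonzero, which holds since λ₁ ≠ 0). -/
/-!
At `λ = -λ₁` and `λ = -conj λ₁` the pole term `|λ₁|²/λ` of `T(λ)` equals `-conj λ₁` resp. `-λ₁`,
so there `T` has polynomial entries in `λ₁, conj λ₁, a, b, c, d`. Since `|f|²` and
`|g|²` are real, `conj Δ = λ₁|f|² + conj λ₁ |g|²`, whence
`λ₁ Δ - conj λ₁ conj Δ = (λ₁² - conj λ₁²)|g|²` and `λ₁ conj Δ - conj λ₁ Δ = (λ₁² - conj λ₁²)|f|²`.
After clearing the denominator `Δ`, each of the four components of the two products is a multiple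
of one of these two identities.
-/

open Complex ComplexConjugate

noncomputable section

open Matrix

theorem Complex.normSq_div_self_s5 (z : ℂ) : (normSq z : ℂ) / z = conj z := by
  rcases eq_or_ne z 0 with rfl | hz
  · simp
  · rw [← mul_conj, mul_div_cancel_left₀ _ hz]

theorem Complex.normSq_div_conj_self_s5 (z : ℂ) : (normSq z : ℂ) / conj z = z := by
  rw [← normSq_conj, normSq_div_self_s5, conj_conj]

theorem darbouxT_neg_self (lam1 a b c d : ℂ) :
    darbouxT lam1 a b c d (-lam1) =
      !![-(lam1 + a * conj lam1), b; c, -(d * lam1 + conj lam1)] := by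
  simp only [darbouxT, mul_div_assoc, div_neg, normSq_div_self_s5, mul_neg, ← neg_add]

theorem darbouxT_neg_conj (lam1 a b c d : ℂ) :
    darbouxT lam1 a b c d (-conj lam1) =
      !![-(conj lam1 + a * lam1), b; c, -(d * conj lam1 + lam1)] := by
  simp only [darbouxT, mul_div_assoc, div_neg, normSq_div_conj_self_s5, mul_neg, ← neg_add]

section DarbouxDelta

variable {lam1 f g Δ : ℂ}

theorem conj_darbouxDelta (hΔ : Δ = conj lam1 * normSq f + lam1 * normSq g) :
    conj Δ = lam1 * normSq f + conj lam1 * normSq g := by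
  simp [hΔ, add_comm]

theorem mul_darbouxDelta_sub_conj (hΔ : Δ = conj lam1 * normSq f + lam1 * normSq g) :
    lam1 * Δ - conj lam1 * conj Δ = (lam1 ^ 2 - conj lam1 ^ 2) * normSq g := by
  rw [conj_darbouxDelta hΔ, hΔ]
  ring

theorem mul_conj_darbouxDelta_sub (hΔ : Δ = conj lam1 * normSq f + lam1 * normSq g) :
    lam1 * conj Δ - conj lam1 * Δ = (lam1 ^ 2 - conj lam1 ^ 2) * normSq f := by
  rw [conj_darbouxDelta hΔ, hΔ]
  ring

end DarbouxDelta

theorem darboux_kernel_neg_general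
    (lam1 : ℂ) (f g : ℂ)
    (Δ : ℂ) (hΔdef : Δ = conj lam1 * (Complex.normSq f : ℂ) + lam1 * (Complex.normSq g : ℂ))
    (hΔ : Δ ≠ 0)
    (a b c d : ℂ)
    (ha : a = -(conj Δ) / Δ)
    (hb : b = -((lam1 ^ 2 - (conj lam1) ^ 2) * f * conj g) / Δ)
    (hc : c = (lam1 ^ 2 - (conj lam1) ^ 2) * conj f * g / Δ)
    (hd : d = -(conj Δ) / Δ) :
    Matrix.mulVec (darbouxT lam1 a b c d (-lam1)) ![-f, g] = 0 ∧
    Matrix.mulVec (darbouxT lam1 a b c d (-(conj lam1))) ![conj g, conj f] = 0 := by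
  have hg := mul_darbouxDelta_sub_conj hΔdef
  have hf := mul_conj_darbouxDelta_sub hΔdef
  rw [← mul_conj] at hf hg
  subst ha hb hc hd
  simp only [darbouxT_neg_self, darbouxT_neg_conj, mulVec_fin_two, of_apply, cons_val_zero,
    cons_val_one, cons_eq_zero_iff, zero_empty, and_true]
  field_simp
  refine ⟨⟨?_, ?_⟩, ?_, ?_⟩
  · linear_combination f * hg
  · linear_combination g * hf
  · linear_combination conj g * hf
  · linear_combination -conj f * hg

/-- The Darboux matrix with the determined coefficients annihilates the vectors
corresponding to `-lam1` and `-conj lam1`. -/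
theorem darboux_kernel_neg
    (lam1 : ℂ) (hlam1 : lam1 ≠ 0) (f g : ℂ)
    (Δ : ℂ) (hΔdef : Δ = conj lam1 * (Complex.normSq f : ℂ) + lam1 * (Complex.normSq g : ℂ))
    (hΔ : Δ ≠ 0)
    (a b c d : ℂ)
    (ha : a = -(conj Δ) / Δ)
    (hb : b = -((lam1 ^ 2 - (conj lam1) ^ 2) * f * conj g) / Δ)
    (hc : c = (lam1 ^ 2 - (conj lam1) ^ 2) * conj f * g / Δ)
    (hd : d = -(conj Δ) / Δ) :
    Matrix.mulVec (darbouxT lam1 a b c d (-lam1)) ![-f, g] = 0 ∧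
    Matrix.mulVec (darbouxT lam1 a b c d (-(conj lam1))) ![conj g, conj f] = 0 :=
  darboux_kernel_neg_general lam1 f g Δ hΔdef hΔ a b c d ha hb hc hd
end
end

section
/- Let λ₁ ∈ ℂ \ {0} and f, g ∈ ℂ with Δ := conj(λ₁)|f|² + λ₁|g|² ≠ 0. Define a = d = −conj(Δ)/Δ, b = −(λ₁² − conj(λ₁)²) f conj(g)/Δ, c = (λ₁² − conj(λ₁)²) conj(f) g/Δ, and let T(λ) be the 2×2 matrix with entries T(λ)₁₁ = λ + a|λ₁|²/λ, T(λ)₁₂ = b, T(λ)₂₁ = c, T(λ)₂₂ = dλ + |λ₁|²/λ. Then for every λ ∈ ℂ with λ ∉ {0, λ₁, −λ₁, conj(λ₁), −conj(λ₁)}, one has T(λ) = [(λ² − λ₁²)(λ² − conj(λ₁)²)/(2λΔ)] · T̂(λ), where T̂(λ) := (λ − λ₁)⁻¹ (conj(g), conj(f))ᵀ (g, −f) + (λ + λ₁)⁻¹ (−conj(g), conj(f))ᵀ (g, f) + (λ − conj(λ₁))⁻¹ (f, −g)ᵀ (conj(f), conj(g)) + (λ + conj(λ₁))⁻¹ (f,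 g)ᵀ (−conj(f), conj(g)); here (u, v)ᵀ (w, z) denotes the rank-one 2×2 matrix with entries uw, uz, vw, vz. -/
open Complex ComplexConjugate

noncomputable section

/-! Both sides of the representation, multiplied by `2 * lam * Δ`, become the polynomial matrix
`2 • darbouxNumerator`: on the left by clearing the denominators `Δ` and `lam`, on the right by
clearing the four simple poles `± lam1`, `± conj lam1`. On the diagonal the two agree because
`conj Δ = lam1 * |f|² + conj lam1 * |g|²`. -/

theorem smul_partial_fractions_four_poles {K M : Type*} [Field K] [AddCommGroup M] [Module K M]
    {x p q : K} (hp : x - p ≠ 0) (hp' : x + p ≠ 0) (hq : x - q ≠ 0) (hq' : x + q ≠ 0)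
    (A B C D : M) :
    ((x ^ 2 - p ^ 2) * (x ^ 2 - q ^ 2)) •
        ((x - p)⁻¹ • A + (x + p)⁻¹ • B + (x - q)⁻¹ • C + (x + q)⁻¹ • D) =
      ((x + p) * (x ^ 2 - q ^ 2)) • A + ((x - p) * (x ^ 2 - q ^ 2)) • B
        + ((x ^ 2 - p ^ 2) * (x + q)) • C + ((x ^ 2 - p ^ 2) * (x - q)) • D := by
  simp only [smul_add, smul_smul]
  congr 1; congr 1; congr 1
  all_goals congr 1; field_simp; ring

def darbouxNumerator (lam1 f g Δ lam : ℂ) : Matrix (Fin 2) (Fin 2) ℂ :=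
  !![lam ^ 2 * Δ - Complex.normSq lam1 * conj Δ,
      -(lam * (lam1 ^ 2 - conj lam1 ^ 2) * f * conj g);
     lam * (lam1 ^ 2 - conj lam1 ^ 2) * conj f * g,
      Complex.normSq lam1 * Δ - lam ^ 2 * conj Δ]

theorem smul_darbouxT_eq_two_smul_darbouxNumerator (lam1 f g Δ lam : ℂ) (hΔ : Δ ≠ 0)
    (hlam : lam ≠ 0) :
    (2 * lam * Δ) • darbouxT lam1 (-(conj Δ) / Δ)
        (-((lam1 ^ 2 - conj lam1 ^ 2) * f * conj g) / Δ)
        ((lam1 ^ 2 - conj lam1 ^ 2) * conj f * g / Δ) (-(conj Δ) / Δ) lam =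
      (2 : ℂ) • darbouxNumerator lam1 f g Δ lam := by
  ext i j
  fin_cases i <;> fin_cases j <;>
    simp only [darbouxT, darbouxNumerator, Matrix.smul_apply, Matrix.of_apply, Matrix.cons_val',
      Matrix.cons_val_zero, Matrix.cons_val_one, Matrix.empty_val', Matrix.cons_val_fin_one,
      Fin.zero_eta, Fin.mk_one, smul_eq_mul] <;>
    field_simp <;> ring

theorem sum_smul_vecMulVec_eq_two_smul_darbouxNumerator (lam1 f g Δ lam : ℂ)
    (hΔ : Δ = conj lam1 * (Complex.normSq f : ℂ) + lam1 * (Complex.normSq g : ℂ)) :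
    ((lam + lam1) * (lam ^ 2 - conj lam1 ^ 2)) • Matrix.vecMulVec ![conj g, conj f] ![g, -f]
      + ((lam - lam1) * (lam ^ 2 - conj lam1 ^ 2)) • Matrix.vecMulVec ![-(conj g), conj f] ![g, f]
      + ((lam ^ 2 - lam1 ^ 2) * (lam + conj lam1)) • Matrix.vecMulVec ![f, -g] ![conj f, conj g]
      + ((lam ^ 2 - lam1 ^ 2) * (lam - conj lam1)) • Matrix.vecMulVec ![f, g] ![-(conj f), conj g] =
      (2 : ℂ) • darbouxNumerator lam1 f g Δ lam := by
  rw [← Complex.mul_conj, ← Complex.mul_conj] at hΔ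
  subst hΔ
  ext i j
  fin_cases i <;> fin_cases j <;>
    simp only [darbouxNumerator, Matrix.vecMulVec_apply, Matrix.add_apply, Matrix.smul_apply,
      Matrix.of_apply, Matrix.cons_val', Matrix.cons_val_zero, Matrix.cons_val_one,
      Matrix.cons_val_fin_one, Matrix.empty_val', Fin.zero_eta, Fin.mk_one, smul_eq_mul, map_add,
      map_mul, conj_conj, ← Complex.mul_conj] <;>
    ring

theorem darboux_rank_one_representation_general
    (lam1 : ℂ) (f g : ℂ)
    (Δ : ℂ) (hΔdef : Δ = conj lam1 * (Complex.normSq f : ℂ) + lam1 * (Complex.normSq g : ℂ))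
    (hΔ : Δ ≠ 0)
    (a b c d : ℂ)
    (ha : a = -(conj Δ) / Δ)
    (hb : b = -((lam1 ^ 2 - (conj lam1) ^ 2) * f * conj g) / Δ)
    (hc : c = (lam1 ^ 2 - (conj lam1) ^ 2) * conj f * g / Δ)
    (hd : d = -(conj Δ) / Δ)
    (lam : ℂ) (h0 : lam ≠ 0) (h1 : lam ≠ lam1) (h2 : lam ≠ -lam1)
    (h3 : lam ≠ conj lam1) (h4 : lam ≠ -(conj lam1)) :
    darbouxT lam1 a b c d lam =
      ((lam ^ 2 - lam1 ^ 2) * (lam ^ 2 - (conj lam1) ^ 2) / (2 * lam * Δ)) •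
        ((lam - lam1)⁻¹ • Matrix.vecMulVec ![conj g, conj f] ![g, -f]
          + (lam + lam1)⁻¹ • Matrix.vecMulVec ![-(conj g), conj f] ![g, f]
          + (lam - conj lam1)⁻¹ • Matrix.vecMulVec ![f, -g] ![conj f, conj g]
          + (lam + conj lam1)⁻¹ • Matrix.vecMulVec ![f, g] ![-(conj f), conj g]) := by
  have e1 : lam - lam1 ≠ 0 := sub_ne_zero.mpr h1
  have e2 : lam + lam1 ≠ 0 := by rwa [← sub_neg_eq_add, sub_ne_zero]
  have e3 : lam - conj lam1 ≠ 0 := sub_ne_zero.mpr h3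
  have e4 : lam + conj lam1 ≠ 0 := by rwa [← sub_neg_eq_add, sub_ne_zero]
  subst ha hb hc hd
  rw [div_eq_inv_mul _ (2 * lam * Δ), mul_smul, smul_partial_fractions_four_poles e1 e2 e3 e4,
    sum_smul_vecMulVec_eq_two_smul_darbouxNumerator lam1 f g Δ lam hΔdef,
    eq_inv_smul_iff₀ (by simp [h0, hΔ])]
  exact smul_darbouxT_eq_two_smul_darbouxNumerator lam1 f g Δ lam hΔ h0

/-- Factorized rank-one representation of the Darboux matrix. -/
theorem darboux_rank_one_representation
    (lam1 : ℂ) (hlam1 : lam1 ≠ 0) (f g : ℂ)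
    (Δ : ℂ) (hΔdef : Δ = conj lam1 * (Complex.normSq f : ℂ) + lam1 * (Complex.normSq g : ℂ))
    (hΔ : Δ ≠ 0)
    (a b c d : ℂ)
    (ha : a = -(conj Δ) / Δ)
    (hb : b = -((lam1 ^ 2 - (conj lam1) ^ 2) * f * conj g) / Δ)
    (hc : c = (lam1 ^ 2 - (conj lam1) ^ 2) * conj f * g / Δ)
    (hd : d = -(conj Δ) / Δ)
    (lam : ℂ) (h0 : lam ≠ 0) (h1 : lam ≠ lam1) (h2 : lam ≠ -lam1)
    (h3 : lam ≠ conj lam1) (h4 : lam ≠ -(conj lam1)) :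
    darbouxT lam1 a b c d lam =
      ((lam ^ 2 - lam1 ^ 2) * (lam ^ 2 - (conj lam1) ^ 2) / (2 * lam * Δ)) •
        ((lam - lam1)⁻¹ • Matrix.vecMulVec ![conj g, conj f] ![g, -f]
          + (lam + lam1)⁻¹ • Matrix.vecMulVec ![-(conj g), conj f] ![g, f]
          + (lam - conj lam1)⁻¹ • Matrix.vecMulVec ![f, -g] ![conj f, conj g]
          + (lam + conj lam1)⁻¹ • Matrix.vecMulVec ![f, g] ![-(conj f), conj g]) :=
  darboux_rank_one_representation_general lam1 f g Δ hΔdef hΔ a b c d ha hb hc hd lam h0 h1 h2 h3 h4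
end
end

section
/- Let λ₁ ∈ ℂ \ {0} and f, g ∈ ℂ with Δ := conj(λ₁)|f|² + λ₁|g|² ≠ 0. Define a = d = −conj(Δ)/Δ, b = −(λ₁² − conj(λ₁)²) f conj(g)/Δ, c = (λ₁² − conj(λ₁)²) conj(f) g/Δ, and let T(λ) be the 2×2 matrix with entries T(λ)₁₁ = λ + a|λ₁|²/λ, T(λ)₁₂ = b, T(λ)₂₁ = c, T(λ)₂₂ = dλ + |λ₁|²/λ. Then for every λ ∈ ℂ \ {0}, det T(λ) = −[(λ² − λ₁²)(λ² − conj(λ₁)²)/λ²] · (conj(Δ)/Δ). -/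
open Complex ComplexConjugate

noncomputable section

/-- Determinant of the Darboux matrix. -/
theorem darboux_determinant
    (lam1 : ℂ) (hlam1 : lam1 ≠ 0) (f g : ℂ)
    (Δ : ℂ) (hΔdef : Δ = conj lam1 * (Complex.normSq f : ℂ) + lam1 * (Complex.normSq g : ℂ))
    (hΔ : Δ ≠ 0)
    (a b c d : ℂ)
    (ha : a = -(conj Δ) / Δ)
    (hb : b = -((lam1 ^ 2 - (conj lam1) ^ 2) * f * conj g) / Δ)
    (hc : c = (lam1 ^ 2 - (conj lam1) ^ 2) * conj f * g / Δ)
    (hd : d = -(conj Δ) / Δ)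
    (lam : ℂ) (h0 : lam ≠ 0) :
    Matrix.det (darbouxT lam1 a b c d lam) =
      -((lam ^ 2 - lam1 ^ 2) * (lam ^ 2 - (conj lam1) ^ 2) / lam ^ 2) * (conj Δ / Δ) := by
  have hF : (Complex.normSq f : ℂ) = f * conj f := (Complex.mul_conj f).symm
  have hG : (Complex.normSq g : ℂ) = g * conj g := (Complex.mul_conj g).symm
  have hN : (Complex.normSq lam1 : ℂ) = lam1 * conj lam1 := (Complex.mul_conj lam1).symm
  have hconj : conj Δ = lam1 * (f * conj f) + conj lam1 * (g * conj g) := by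
    rw [hΔdef]; simp [hF, hG]; ring
  rw [darbouxT, Matrix.det_fin_two_of, ha, hb, hc, hd, hN]
  field_simp
  rw [hconj, hΔdef, hF, hG]
  ring
end
end

section
/- Let h > 0 and θ ∈ (−π, π) with θ ≠ 0, and define the real number ω(θ) := [((h²/4) + 1) + ((h²/4) − 1) cos θ] / (h sin θ). Then (h²/4)·(e^{iθ} + 1)/(e^{iθ} − 1) − (e^{iθ} − 1)/(e^{iθ} + 1) = −i h ω(θ); in particular, the left-hand side is purely imaginary, and consequently for any c ∈ ℂ the function û(t) = c·e^{−i ω(θ) t} satisfies h û'(t) = [(h²/4)(e^{iθ} + 1)/(e^{iθ} − 1) − (e^{iθ} − 1)/(e^{iθ} + 1)]·û(t) with |û(t)| = |c| constant in t. -/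
/-!
With `e = exp (I z)`, the quotients `(e + 1) / (e - 1)` and `(e - 1) / (e + 1)` are
`-I (1 + cos z) / sin z` and `I (1 - cos z) / sin z` (the cotangent and tangent of `z / 2`);
both identities are polynomial in `cos z`, `sin z` after clearing denominators and follow
from `sin² + cos² = 1`, which also rule out `e = ±1` when `sin z ≠ 0`.
-/

open Complex

namespace Complex

theorem exp_I_mul_add_one_mul_sin (z : ℂ) :
    (exp (I * z) + 1) * sin z = -I * (1 + cos z) * (exp (I * z) - 1) := by
  rw [mul_comm I z, exp_mul_I]
  linear_combination (1 + cos z) * sin z * I_sq + I * sin_sq_add_cos_sq z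

theorem exp_I_mul_sub_one_mul_sin (z : ℂ) :
    (exp (I * z) - 1) * sin z = I * (1 - cos z) * (exp (I * z) + 1) := by
  rw [mul_comm I z, exp_mul_I]
  linear_combination -(1 - cos z) * sin z * I_sq + I * sin_sq_add_cos_sq z

variable {z : ℂ}

theorem exp_I_mul_sub_one_ne_zero (hz : sin z ≠ 0) : exp (I * z) - 1 ≠ 0 := by
  intro h
  have := exp_I_mul_add_one_mul_sin z
  rw [h, sub_eq_zero.mp h] at this
  exact hz (by linear_combination this / 2)

theorem exp_I_mul_add_one_ne_zero (hz : sin z ≠ 0) : exp (I * z) + 1 ≠ 0 := by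
  intro h
  have := exp_I_mul_sub_one_mul_sin z
  rw [h, eq_neg_of_add_eq_zero_left h] at this
  exact hz (by linear_combination -this / 2)

theorem exp_I_mul_add_one_div_sub_one (hz : sin z ≠ 0) :
    (exp (I * z) + 1) / (exp (I * z) - 1) = -I * ((1 + cos z) / sin z) := by
  rw [div_eq_iff (exp_I_mul_sub_one_ne_zero hz), ← mul_div_assoc, div_mul_eq_mul_div,
    eq_div_iff hz, exp_I_mul_add_one_mul_sin]

theorem exp_I_mul_sub_one_div_add_one (hz : sin z ≠ 0) :
    (exp (I * z) - 1) / (exp (I * z) + 1) = I * ((1 - cos z) / sin z) := by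
  rw [div_eq_iff (exp_I_mul_add_one_ne_zero hz), ← mul_div_assoc, div_mul_eq_mul_div,
    eq_div_iff hz, exp_I_mul_sub_one_mul_sin]

theorem mul_div_sub_div_exp_I_mul (a : ℂ) (hz : sin z ≠ 0) :
    a * (exp (I * z) + 1) / (exp (I * z) - 1) - (exp (I * z) - 1) / (exp (I * z) + 1)
      = -I * (((a + 1) + (a - 1) * cos z) / sin z) := by
  rw [mul_div_assoc, exp_I_mul_add_one_div_sub_one hz, exp_I_mul_sub_one_div_add_one hz]
  ring

theorem hasDerivAt_mul_exp_mul_ofReal (c k : ℂ) (t : ℝ) :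
    HasDerivAt (fun s : ℝ => c * exp (k * s)) (k * (c * exp (k * t))) t := by
  have := (((hasDerivAt_id (t : ℂ)).const_mul k).cexp.comp_ofReal).const_mul c
  simpa [mul_left_comm, mul_comm] using this

end Complex

/-- Dispersion relation for the linearization of the semi-discrete massive Thirring model
at the zero background. -/
theorem mtm_zero_background_dispersion
    (h : ℝ) (hh : 0 < h) (θ : ℝ) (hθ : θ ∈ Set.Ioo (-Real.pi) Real.pi) (hθ0 : θ ≠ 0)
    (ω : ℝ)
    (hω : ω = ((h ^ 2 / 4 + 1) + (h ^ 2 / 4 - 1) * Real.cos θ) / (h * Real.sin θ)) :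
    (h ^ 2 / 4) * (Complex.exp (Complex.I * θ) + 1) / (Complex.exp (Complex.I * θ) - 1)
        - (Complex.exp (Complex.I * θ) - 1) / (Complex.exp (Complex.I * θ) + 1)
      = -Complex.I * h * ω ∧
    (∀ c : ℂ, ∀ t : ℝ,
      h * deriv (fun s : ℝ => c * Complex.exp (-Complex.I * ω * s)) t
        = ((h ^ 2 / 4) * (Complex.exp (Complex.I * θ) + 1) / (Complex.exp (Complex.I * θ) - 1)
            - (Complex.exp (Complex.I * θ) - 1) / (Complex.exp (Complex.I * θ) + 1))
          * (c * Complex.exp (-Complex.I * ω * t))) ∧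
    (∀ c : ℂ, ∀ t : ℝ,
      ‖c * Complex.exp (-Complex.I * ω * t)‖ = ‖c‖) := by
  have hsin : Real.sin θ ≠ 0 := fun h0 ↦
    hθ0 ((Real.sin_eq_zero_iff_of_lt_of_lt hθ.1 hθ.2).mp h0)
  have hsinC : Complex.sin θ ≠ 0 := by exact_mod_cast hsin
  have hhC : (h : ℂ) ≠ 0 := by exact_mod_cast hh.ne'
  have symbol : (h ^ 2 / 4) * (Complex.exp (Complex.I * θ) + 1) / (Complex.exp (Complex.I * θ) - 1)
      - (Complex.exp (Complex.I * θ) - 1) / (Complex.exp (Complex.I * θ) + 1)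
      = -Complex.I * h * ω := by
    rw [mul_div_sub_div_exp_I_mul _ hsinC, hω]
    push_cast
    field_simp
  refine ⟨symbol, fun c t ↦ ?_, fun c t ↦ ?_⟩
  · rw [(hasDerivAt_mul_exp_mul_ofReal c _ t).deriv, symbol]
    ring
  · simp [Complex.norm_exp]
end

section
/- Let ρ > 0, h > 0, δ₁ > 0, and θ₁ ∈ (0, π). Then the pair of equations (1/ρ² − ρ² + (1/δ₁² − δ₁²) cos θ₁ = 0 and δ₁⁴ h² ρ² + δ₁² (h² ρ⁴ − 4) cos θ₁ − 4ρ² = 0) holds if and only if (δ₁² = 2/(hρ²) and (4 − h²ρ⁴) cos θ₁ = 2h(1 − ρ⁴)). -/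
/-- Condition of no periodic oscillations for the one-breather on the constant background:
equivalence between the two original equations and the solved form. -/
theorem breather_no_oscillation_condition
    (ρ h δ₁ θ₁ : ℝ) (hρ : 0 < ρ) (hh : 0 < h) (hδ₁ : 0 < δ₁)
    (hθ₁ : θ₁ ∈ Set.Ioo 0 Real.pi) :
    (1 / ρ ^ 2 - ρ ^ 2 + (1 / δ₁ ^ 2 - δ₁ ^ 2) * Real.cos θ₁ = 0 ∧
      δ₁ ^ 4 * h ^ 2 * ρ ^ 2 + δ₁ ^ 2 * (h ^ 2 * ρ ^ 4 - 4) * Real.cos θ₁ - 4 * ρ ^ 2 = 0) ↔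
    (δ₁ ^ 2 = 2 / (h * ρ ^ 2) ∧
      (4 - h ^ 2 * ρ ^ 4) * Real.cos θ₁ = 2 * h * (1 - ρ ^ 4)) := by
  obtain ⟨hθ0, hθπ⟩ := hθ₁
  set c := Real.cos θ₁ with hcdef
  have hρ2 : (0:ℝ) < ρ ^ 2 := by positivity
  have hd2 : (0:ℝ) < δ₁ ^ 2 := by positivity
  have hρne : ρ ^ 2 ≠ 0 := ne_of_gt hρ2
  have hdne : δ₁ ^ 2 ≠ 0 := ne_of_gt hd2
  have hhρ : h * ρ ^ 2 ≠ 0 := by positivity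
  have hcgt : -1 < c := by
    have := Real.cos_lt_cos_of_nonneg_of_le_pi (le_of_lt hθ0) le_rfl hθπ
    simpa [Real.cos_pi, hcdef] using this
  constructor
  · rintro ⟨e1, e2⟩
    have p1 : δ₁ ^ 2 * (1 - ρ ^ 4) + (1 - δ₁ ^ 4) * c * ρ ^ 2 = 0 := by
      field_simp at e1
      linarith [e1]
    have key : (h ^ 2 * ρ ^ 4 * δ₁ ^ 4 - 4) * (δ₁ ^ 4 - ρ ^ 4) = 0 := by
      linear_combination ((δ₁ ^ 4 - 1) * ρ ^ 2) * e2 + (δ₁ ^ 2 * (h ^ 2 * ρ ^ 4 - 4)) * p1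
    rcases mul_eq_zero.mp key with ha | hb
    · have ha' : h ^ 2 * ρ ^ 4 * δ₁ ^ 4 = 4 := by linarith
      have hsq : (h * ρ ^ 2 * δ₁ ^ 2 - 2) * (h * ρ ^ 2 * δ₁ ^ 2 + 2) = 0 := by
        linear_combination ha'
      have hpos : (0:ℝ) < h * ρ ^ 2 * δ₁ ^ 2 + 2 := by positivity
      have h2 : h * ρ ^ 2 * δ₁ ^ 2 = 2 := by
        rcases mul_eq_zero.mp hsq with h' | h'
        · linarith
        · linarith
      constructor
      · rw [eq_div_iff hhρ]; linear_combination h2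
      · linear_combination (-(h ^ 2 * ρ ^ 2)) * p1 + (h * (1 - ρ ^ 4)) * h2 + (-c) * ha'
    · have hb' : δ₁ ^ 4 = ρ ^ 4 := by linarith
      have hdr : δ₁ ^ 2 = ρ ^ 2 := by
        nlinarith [hd2, hρ2]
      have q : ρ ^ 2 * (1 - ρ ^ 4) * (1 + c) = 0 := by
        linear_combination p1 + (c * ρ ^ 2 * (δ₁ ^ 2 + ρ ^ 2) - (1 - ρ ^ 4)) * hdr
      have h14 : (1:ℝ) - ρ ^ 4 = 0 := by
        by_contra hne
        exact (mul_ne_zero (mul_ne_zero hρne hne) (by linarith : (1:ℝ) + c ≠ 0)) q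
      have hρ1 : ρ ^ 2 = 1 := by nlinarith [h14, hρ2]
      have hd1 : δ₁ ^ 2 = 1 := hdr.trans hρ1
      have hfac : (h ^ 2 - 4) * (1 + c) = 0 := by
        linear_combination e2 - (h ^ 2 * ρ ^ 2 * (δ₁ ^ 2 + 1) + (h ^ 2 * ρ ^ 4 - 4) * c) * hd1
          - ((h ^ 2 - 4) + c * h ^ 2 * (ρ ^ 2 + 1)) * hρ1
      have hh4 : h ^ 2 = 4 := by
        rcases mul_eq_zero.mp hfac with h' | h'
        · linarith
        · linarith
      have hh2 : h = 2 := by nlinarith [hh4, hh]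
      constructor
      · rw [eq_div_iff hhρ, hd1, hh2, hρ1]; ring
      · linear_combination (-(c * (h + 2) * ρ ^ 4)) * hh2 + ((2 * h - 4 * c) * (ρ ^ 2 + 1)) * hρ1
  · rintro ⟨hd, hcc⟩
    have h2 : h * ρ ^ 2 * δ₁ ^ 2 = 2 := by
      rw [eq_div_iff hhρ] at hd
      linear_combination hd
    have p1 : δ₁ ^ 2 * (1 - ρ ^ 4) + (1 - δ₁ ^ 4) * c * ρ ^ 2 = 0 := by
      have hne : (h ^ 2 * ρ ^ 2 : ℝ) ≠ 0 := by positivity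
      have hmul : (δ₁ ^ 2 * (1 - ρ ^ 4) + (1 - δ₁ ^ 4) * c * ρ ^ 2) * (h ^ 2 * ρ ^ 2) = 0 := by
        linear_combination (-1) * hcc + (h * (1 - ρ ^ 4) - c * (h * ρ ^ 2 * δ₁ ^ 2 + 2)) * h2
      exact (mul_eq_zero.mp hmul).resolve_right hne
    constructor
    · field_simp
      linear_combination p1
    · have hmul : (δ₁ ^ 4 * h ^ 2 * ρ ^ 2 + δ₁ ^ 2 * (h ^ 2 * ρ ^ 4 - 4) * c - 4 * ρ ^ 2)
          * (h * ρ ^ 2) = 0 := by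
        linear_combination (-2) * hcc
          + (h * (h * ρ ^ 2 * δ₁ ^ 2 + 2) + (h ^ 2 * ρ ^ 4 - 4) * c) * h2
      exact (mul_eq_zero.mp hmul).resolve_right hhρ
end

section
/- Let ρ > 0 and h > 0 with h²ρ⁴ ≠ 4. Set δ₁ := √(2/h)/ρ (so δ₁² = 2/(hρ²)) and c := 2h(1 − ρ⁴)/(4 − h²ρ⁴). Then (δ₁⁴ h² − 4)(h² ρ⁴ − 4)/(4 δ₁² h²) − 4ρ² c = (1 − ρ⁴)(h² ρ⁴ + 4)² / (2hρ²(h² ρ⁴ − 4)), and this quantity is positive if and only if either (ρ < 1 and h²ρ⁴ > 4) or (ρ > 1 and h²ρ⁴ < 4). -/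
/-- The positivity constraint for non-oscillating one-solitons on the constant background,
evaluated at the admissible `(δ₁, cos θ₁)`. -/
theorem soliton_existence_region
    (ρ h : ℝ) (hρ : 0 < ρ) (hh : 0 < h) (hne : h ^ 2 * ρ ^ 4 ≠ 4)
    (δ₁ : ℝ) (hδ₁ : δ₁ = Real.sqrt (2 / h) / ρ)
    (c : ℝ) (hc : c = 2 * h * (1 - ρ ^ 4) / (4 - h ^ 2 * ρ ^ 4)) :
    δ₁ ^ 2 = 2 / (h * ρ ^ 2) ∧
    (δ₁ ^ 4 * h ^ 2 - 4) * (h ^ 2 * ρ ^ 4 - 4) / (4 * δ₁ ^ 2 * h ^ 2) - 4 * ρ ^ 2 * c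
      = (1 - ρ ^ 4) * (h ^ 2 * ρ ^ 4 + 4) ^ 2 / (2 * h * ρ ^ 2 * (h ^ 2 * ρ ^ 4 - 4)) ∧
    (0 < (δ₁ ^ 4 * h ^ 2 - 4) * (h ^ 2 * ρ ^ 4 - 4) / (4 * δ₁ ^ 2 * h ^ 2) - 4 * ρ ^ 2 * c ↔
      (ρ < 1 ∧ 4 < h ^ 2 * ρ ^ 4) ∨ (1 < ρ ∧ h ^ 2 * ρ ^ 4 < 4)) := by
  have hh0 : h ≠ 0 := ne_of_gt hh
  have hρ0 : ρ ≠ 0 := ne_of_gt hρ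
  have hne' : h ^ 2 * ρ ^ 4 - 4 ≠ 0 := sub_ne_zero.mpr hne
  have hne'' : (4 : ℝ) - h ^ 2 * ρ ^ 4 ≠ 0 := sub_ne_zero.mpr (Ne.symm hne)
  have hsq : δ₁ ^ 2 = 2 / (h * ρ ^ 2) := by
    rw [hδ₁, div_pow, Real.sq_sqrt (by positivity : (0:ℝ) ≤ 2 / h)]
    field_simp
  have hsq0 : δ₁ ≠ 0 := by
    intro h0
    rw [h0] at hsq
    simp at hsq
    exact absurd hsq.symm (by positivity)
  have h4 : δ₁ ^ 4 = (δ₁ ^ 2) ^ 2 := by ring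
  have heq : (δ₁ ^ 4 * h ^ 2 - 4) * (h ^ 2 * ρ ^ 4 - 4) / (4 * δ₁ ^ 2 * h ^ 2) - 4 * ρ ^ 2 * c
      = (1 - ρ ^ 4) * (h ^ 2 * ρ ^ 4 + 4) ^ 2 / (2 * h * ρ ^ 2 * (h ^ 2 * ρ ^ 4 - 4)) := by
    rw [hc, h4, hsq]
    field_simp
    ring
  refine ⟨hsq, heq, ?_⟩
  rw [heq]
  have key : ∀ x y : ℝ, 0 < x → 0 < y → x < y → x ^ 4 < y ^ 4 := by
    intro x y hx hy hxy
    exact pow_lt_pow_left₀ hxy (le_of_lt hx) (by norm_num)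
  have hρ1 : (1 - ρ ^ 4 > 0 ↔ ρ < 1) := by
    constructor
    · intro h1
      by_contra hcon
      push_neg at hcon
      rcases eq_or_lt_of_le hcon with heq1 | hlt1
      · rw [← heq1] at h1; norm_num at h1
      · have := key 1 ρ one_pos hρ hlt1; norm_num at this; linarith
    · intro h1
      have := key ρ 1 hρ one_pos h1; norm_num at this; linarith
  have hρ2 : (1 - ρ ^ 4 < 0 ↔ 1 < ρ) := by
    constructor
    · intro h1
      by_contra hcon
      push_neg at hcon
      rcases eq_or_lt_of_le hcon with heq1 | hlt1
      · rw [heq1] at h1; norm_num at h1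
      · have := key ρ 1 hρ one_pos hlt1; norm_num at this; linarith
    · intro h1
      have := key 1 ρ one_pos hρ h1; norm_num at this; linarith
  have hsqpos : (0:ℝ) < (h ^ 2 * ρ ^ 4 + 4) ^ 2 := by positivity
  have h2h : (0:ℝ) < 2 * h * ρ ^ 2 := by positivity
  rw [div_pos_iff]
  constructor
  · rintro (⟨hnum, hden⟩ | ⟨hnum, hden⟩)
    · left
      constructor
      · rw [← hρ1]; nlinarith
      · nlinarith
    · right
      constructor
      · rw [← hρ2]; nlinarith
      · nlinarith
  · rintro (⟨hr, hb⟩ | ⟨hr, hb⟩)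
    · left
      constructor
      · have := hρ1.mpr hr; nlinarith
      · nlinarith
    · right
      constructor
      · have := hρ2.mpr hr; nlinarith
      · nlinarith
end
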